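/- arXiv:1310.4663 — 2 statements merged into one kernel-verified Lean document; each statement's English description precedes it below -/
import Mathlib

section
/- Let (Ω,Σ,ν) be a finite measure space, let λ be a finite nonnegative measure on (Ω,Σ), let B ∈ Σ, b ≥ 0 and ε > 0, and assume |λ(C) − b·ν(C)| ≤ ε·ν(B)^{1/2} for every measurable C ⊆ B. Then for every sign x on B that is mean zero with respect to ν, one has |∫_B x dλ| ≤ 2ε·ν(B)^{1/2}. -/
open MeasureTheory

/-- A *sign* on a measurable set `B` is a measurable function `x : Ω → ℝ` with
`x² = 𝟙_B`, i.e. `x` takes values `±1` on `B` and `0` off `B`. -/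
def IsSignOn {Ω : Type*} [MeasurableSpace Ω] (x : Ω → ℝ) (B : Set Ω) : Prop :=
  Measurable x ∧ ∀ t, (x t) ^ 2 = B.indicator (fun _ => (1 : ℝ)) t

/-! A sign `x` on `B` is `𝟙_P - 𝟙_N` with `P = {x = 1}` and `N = {x = -1}` measurable subsets
of `B`. Mean zero says `ν P = ν N`, so `∫_B x dλ = (λ P - b ν P) - (λ N - b ν N)`, and each
bracket is at most `ε ν(B)^{1/2}` in absolute value. -/

namespace IsSignOn

variable {Ω : Type*} [MeasurableSpace Ω] {x : Ω → ℝ} {B : Set Ω}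

theorem eq_zero_of_notMem (hx : IsSignOn x B) {t : Ω} (ht : t ∉ B) : x t = 0 :=
  pow_eq_zero_iff two_ne_zero |>.mp <| by rw [hx.2 t, Set.indicator_of_notMem ht]

theorem eq_one_or_eq_neg_one_of_mem (hx : IsSignOn x B) {t : Ω} (ht : t ∈ B) :
    x t = 1 ∨ x t = -1 :=
  sq_eq_one_iff.mp <| by rw [hx.2 t, Set.indicator_of_mem ht]

theorem indicator_sub_indicator (hx : IsSignOn x B) :
    (x ⁻¹' {1}).indicator 1 - (x ⁻¹' {-1}).indicator 1 = x := by
  funext t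
  by_cases ht : t ∈ B
  · rcases hx.eq_one_or_eq_neg_one_of_mem ht with h | h <;> norm_num [Set.indicator, h]
  · simp [Set.indicator, hx.eq_zero_of_notMem ht]

theorem integral_eq_measureReal_sub (hx : IsSignOn x B) (μ : Measure Ω) [IsFiniteMeasure μ] :
    ∫ t, x t ∂μ = μ.real (x ⁻¹' {1}) - μ.real (x ⁻¹' {-1}) := by
  have hP : MeasurableSet (x ⁻¹' {1}) := hx.1 (measurableSet_singleton _)
  have hN : MeasurableSet (x ⁻¹' {-1}) := hx.1 (measurableSet_singleton _)
  conv_lhs => rw [← hx.indicator_sub_indicator]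
  simp only [Pi.sub_apply]
  rw [integral_sub ((integrable_const 1).indicator hP) ((integrable_const 1).indicator hN),
    integral_indicator_one hP, integral_indicator_one hN]

theorem preimage_subset (hx : IsSignOn x B) {s : Set ℝ} (hs : (0 : ℝ) ∉ s) : x ⁻¹' s ⊆ B :=
  fun _ hts => by_contra fun ht => hs (hx.eq_zero_of_notMem ht ▸ hts)

end IsSignOn

theorem abs_integral_sign_le_general {Ω : Type*} [MeasurableSpace Ω]
    (nu lam : Measure Ω) [IsFiniteMeasure nu] [IsFiniteMeasure lam]
    (B : Set Ω) (b ε : ℝ)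
    (h : ∀ C : Set Ω, C ⊆ B → MeasurableSet C →
      |(lam C).toReal - b * (nu C).toReal| ≤ ε * (nu B).toReal ^ (1 / 2 : ℝ)) :
    ∀ x : Ω → ℝ, IsSignOn x B → (∫ t, x t ∂nu) = 0 →
      |∫ t in B, x t ∂lam| ≤ 2 * ε * (nu B).toReal ^ (1 / 2 : ℝ) := by
  intro x hx hmean
  set P := x ⁻¹' {1}
  set N := x ⁻¹' {-1}
  have hnu : nu.real P = nu.real N := by
    linarith [hx.integral_eq_measureReal_sub nu]
  rw [setIntegral_eq_integral_of_forall_compl_eq_zero fun _ => hx.eq_zero_of_notMem,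
    hx.integral_eq_measureReal_sub lam]
  calc |lam.real P - lam.real N|
      = |(lam.real P - b * nu.real P) - (lam.real N - b * nu.real N)| := by rw [hnu]; ring_nf
    _ ≤ |lam.real P - b * nu.real P| + |lam.real N - b * nu.real N| := abs_sub _ _
    _ ≤ ε * (nu B).toReal ^ (1 / 2 : ℝ) + ε * (nu B).toReal ^ (1 / 2 : ℝ) :=
      add_le_add (h P (hx.preimage_subset (by norm_num)) (hx.1 (measurableSet_singleton _)))
        (h N (hx.preimage_subset (by norm_num)) (hx.1 (measurableSet_singleton _)))
    _ = 2 * ε * (nu B).toReal ^ (1 / 2 : ℝ) := by ring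

/-- If `|λ C - b·ν C| ≤ ε·(ν B)^(1/2)` for every measurable `C ⊆ B`, then every sign `x`
on `B` that is mean zero with respect to `ν` satisfies `|∫_B x dλ| ≤ 2ε·(ν B)^(1/2)`. -/
theorem abs_integral_sign_le {Ω : Type*} [MeasurableSpace Ω]
    (nu lam : Measure Ω) [IsFiniteMeasure nu] [IsFiniteMeasure lam]
    (B : Set Ω) (hB : MeasurableSet B) (b ε : ℝ) (hb : 0 ≤ b) (hε : 0 < ε)
    (h : ∀ C : Set Ω, C ⊆ B → MeasurableSet C →
      |(lam C).toReal - b * (nu C).toReal| ≤ ε * (nu B).toReal ^ (1 / 2 : ℝ)) :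
    ∀ x : Ω → ℝ, IsSignOn x B → (∫ t, x t ∂nu) = 0 →
      |∫ t in B, x t ∂lam| ≤ 2 * ε * (nu B).toReal ^ (1 / 2 : ℝ) :=
  abs_integral_sign_le_general nu lam B b ε h
end

section
/- Let (Ω,Σ,ν) be a finite measure space, let λ be a finite non-atomic nonnegative measure on (Ω,Σ), let B ∈ Σ with ν(B) > 0, let b > 0 and ε > 0, and assume that |λ(C) − b·ν(C)| ≤ ε·ν(B)^{1/2} for every measurable C ⊆ B. Then for every sign x on B that is mean zero with respect to ν, there exists a measurable function x_ε : Ω → {−1,0,1} supported in B such that x_ε is a sign on its support, x_ε is mean zero with respect to λ, and b·ν({t : x_ε(t) ≠ x(t)}) ≤ 3ε·ν(B)^{1/2}. -/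
open MeasureTheory

/-!
Split the sign `x` into its positive part `P = {x = 1}` and its negative part `N = {x = -1}`;
mean zero for `ν` means `ν P = ν N`. Say `λ N ≤ λ P`. By Sierpiński's theorem for the non-atomic
measure `λ` there is `P' ⊆ P` with `λ P' = λ N`, and `x_ε = 𝟙_{P'} - 𝟙_N` is mean zero for `λ` and
differs from `x` exactly on `P \ P'`. With `S = ε ν(B)^{1/2}`, the density approximation applied
to `P \ P'`, `P` and `N` gives
`b ν(P \ P') ≤ λ P - λ N + S ≤ (b ν P + S) - (b ν N - S) + S = 3 S`.
-/

open Set Function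
open scoped ENNReal

namespace MeasureTheory.Measure

variable {Ω : Type*} [MeasurableSpace Ω] {μ : Measure Ω} {A C : Set Ω} {r : ℝ≥0∞}

def IsNonatomic (μ : Measure Ω) : Prop :=
  ∀ A, MeasurableSet A → 0 < μ A → ∃ C, C ⊆ A ∧ MeasurableSet C ∧ 0 < μ C ∧ μ C < μ A

theorem IsNonatomic.exists_subset_measure_le_half (hμ : μ.IsNonatomic) (hA : MeasurableSet A)
    (hA₀ : 0 < μ A) : ∃ C ⊆ A, MeasurableSet C ∧ 0 < μ C ∧ μ C ≤ μ A / 2 := by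
  obtain ⟨C, hCA, hC, hC₀, hC_lt⟩ := hμ A hA hA₀
  by_cases hC_le : μ C ≤ μ A / 2
  · exact ⟨C, hCA, hC, hC₀, hC_le⟩
  refine ⟨A \ C, sdiff_subset, hA.diff hC, ?_, ?_⟩ <;>
    rw [measure_sdiff hCA hC.nullMeasurableSet hC_lt.ne_top]
  · exact tsub_pos_of_lt hC_lt
  · rw [tsub_le_iff_right]
    calc μ A = μ A / 2 + μ A / 2 := (ENNReal.add_halves _).symm
      _ ≤ μ A / 2 + μ C := by gcongr; exact (not_le.mp hC_le).le

theorem IsNonatomic.exists_subset_measure_le (hμ : μ.IsNonatomic) (hA : MeasurableSet A)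
    (hA_fin : μ A ≠ ∞) (hA₀ : 0 < μ A) {δ : ℝ≥0∞} (hδ : 0 < δ) :
    ∃ C ⊆ A, MeasurableSet C ∧ 0 < μ C ∧ μ C ≤ δ := by
  have halving : ∀ n : ℕ, ∃ C ⊆ A, MeasurableSet C ∧ 0 < μ C ∧ μ C ≤ 2⁻¹ ^ n * μ A := by
    intro n
    induction n with
    | zero => exact ⟨A, subset_rfl, hA, hA₀, by simp⟩
    | succ n ih =>
      obtain ⟨C, hCA, hC, hC₀, hC_le⟩ := ih
      obtain ⟨D, hDC, hD, hD₀, hD_le⟩ := hμ.exists_subset_measure_le_half hC hC₀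
      refine ⟨D, hDC.trans hCA, hD, hD₀, ?_⟩
      calc μ D ≤ μ C / 2 := hD_le
        _ ≤ 2⁻¹ ^ n * μ A / 2 := by gcongr
        _ = 2⁻¹ ^ (n + 1) * μ A := by rw [div_eq_mul_inv, pow_succ]; ring
  obtain ⟨n, hn⟩ := ENNReal.exists_inv_two_pow_lt (ENNReal.div_pos hδ.ne' hA_fin).ne'
  obtain ⟨C, hCA, hC, hC₀, hC_le⟩ := halving n
  exact ⟨C, hCA, hC, hC₀, hC_le.trans (ENNReal.mul_lt_of_lt_div hn).le⟩

theorem exists_subset_sdiff_half_maximal (A : Set Ω) (hC : μ C ≤ r) (hr : r ≠ ∞) :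
    ∃ D ⊆ A \ C, MeasurableSet D ∧ μ C + μ D ≤ r ∧
      ∀ E ⊆ A \ C, MeasurableSet E → μ C + μ E ≤ r → μ E ≤ 2 * μ D := by
  set S := sSup (μ '' {E | E ⊆ A \ C ∧ MeasurableSet E ∧ μ C + μ E ≤ r})
  have le_S : ∀ E ⊆ A \ C, MeasurableSet E → μ C + μ E ≤ r → μ E ≤ S :=
    fun E hEA hE hEr => le_sSup (mem_image_of_mem μ ⟨hEA, hE, hEr⟩)
  by_cases hS : S = 0
  · refine ⟨∅, empty_subset _, .empty, by simpa using hC, fun E hEA hE hEr => ?_⟩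
    exact ((le_S E hEA hE hEr).trans_eq hS).trans zero_le
  have hS_fin : S ≠ ∞ := ne_top_of_le_ne_top hr <| sSup_le <| by
    rintro _ ⟨E, ⟨-, -, hEr⟩, rfl⟩
    exact le_add_self.trans hEr
  obtain ⟨_, ⟨D, ⟨hDA, hD, hDr⟩, rfl⟩, hSD⟩ := lt_sSup_iff.mp (ENNReal.half_lt_self hS hS_fin)
  refine ⟨D, hDA, hD, hDr, fun E hEA hE hEr => ?_⟩
  calc μ E ≤ S := le_S E hEA hE hEr
    _ = S / 2 + S / 2 := (ENNReal.add_halves _).symm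
    _ ≤ μ D + μ D := by gcongr
    _ = 2 * μ D := (two_mul _).symm

/-- Sierpiński's theorem. -/
theorem IsNonatomic.exists_subset_measure_eq (hμ : μ.IsNonatomic) (hA : MeasurableSet A)
    (hA_fin : μ A ≠ ∞) (hr : r ≤ μ A) : ∃ C ⊆ A, MeasurableSet C ∧ μ C = r := by
  have hr_fin : r ≠ ∞ := ne_top_of_le_ne_top hA_fin hr
  choose! D hDA hD hDr hD_max using
    fun C (hC : μ C ≤ r) => exists_subset_sdiff_half_maximal A hC hr_fin
  set seq : ℕ → Set Ω := fun n => (fun C => C ∪ D C)^[n] ∅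
  have seq_succ (n : ℕ) : seq (n + 1) = seq n ∪ D (seq n) := Function.iterate_succ_apply' _ _ _
  have seq_good (n : ℕ) : seq n ⊆ A ∧ MeasurableSet (seq n) ∧ μ (seq n) ≤ r := by
    induction n with
    | zero => simp [seq]
    | succ n ih =>
      obtain ⟨hA', hm, hr'⟩ := ih
      rw [seq_succ]
      refine ⟨union_subset hA' ((hDA _ hr').trans sdiff_subset), hm.union (hD _ hr'), ?_⟩
      exact (measure_union_le _ _).trans (hDr _ hr')
  have measure_seq_succ (n : ℕ) : μ (seq (n + 1)) = μ (seq n) + μ (D (seq n)) := by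
    rw [seq_succ, measure_union _ (hD _ (seq_good n).2.2)]
    exact disjoint_sdiff_right.mono_right (hDA _ (seq_good n).2.2)
  have seq_mono : Monotone seq :=
    monotone_nat_of_le_succ fun n => (seq_succ n).symm ▸ subset_union_left
  have measure_iUnion : μ (⋃ n, seq n) = ⨆ n, μ (seq n) := seq_mono.measure_iUnion
  have hC_le : μ (⋃ n, seq n) ≤ r := measure_iUnion ▸ iSup_le fun n => (seq_good n).2.2
  have hC : MeasurableSet (⋃ n, seq n) := .iUnion fun n => (seq_good n).2.1
  refine ⟨⋃ n, seq n, iUnion_subset fun n => (seq_good n).1, hC,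
    hC_le.antisymm (not_lt.mp fun hC_lt => ?_)⟩
  -- a leftover piece of positive measure would have been worth adding at every greedy step
  obtain ⟨E, hEA, hE, hE₀, hE_le⟩ := hμ.exists_subset_measure_le (hA.diff hC)
    (ne_top_of_le_ne_top hA_fin (measure_mono sdiff_subset))
    ((tsub_pos_of_lt (hC_lt.trans_le hr)).trans_le le_measure_sdiff) (tsub_pos_of_lt hC_lt)
  have hE_le_D (n : ℕ) : μ E ≤ 2 * μ (D (seq n)) := by
    refine hD_max _ (seq_good n).2.2 E
      (hEA.trans (sdiff_subset_sdiff_right (subset_iUnion _ n))) hE ?_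
    calc μ (seq n) + μ E ≤ μ (⋃ n, seq n) + (r - μ (⋃ n, seq n)) :=
          add_le_add (measure_iUnion ▸ le_iSup (fun n => μ (seq n)) n) hE_le
      _ = r := add_tsub_cancel_of_le hC_le
  have growth (n : ℕ) : n * μ E ≤ 2 * μ (seq n) := by
    induction n with
    | zero => simp
    | succ n ih =>
      rw [measure_seq_succ, mul_add, Nat.cast_succ, add_one_mul]
      exact add_le_add ih (hE_le_D n)
  obtain ⟨n, hn⟩ := ENNReal.exists_nat_mul_gt (b := 2 * r) hE₀.ne' (by finiteness)
  exact (hn.trans_le (growth n)).not_ge (by gcongr 2 * ?_; exact (seq_good n).2.2)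

end MeasureTheory.Measure

section Sign

variable {Ω : Type*} {x : Ω → ℝ} {B P N P' N' : Set Ω}

noncomputable def signOf (P N : Set Ω) : Ω → ℝ := P.indicator 1 - N.indicator 1

theorem IsSignOn.support_eq [MeasurableSpace Ω] (hx : IsSignOn x B) : support x = B := by
  ext t
  rw [mem_support, ← pow_ne_zero_iff two_ne_zero, hx.2 t]
  simp

theorem IsSignOn.eq_signOf [MeasurableSpace Ω] (hx : IsSignOn x B) :
    x = signOf (x ⁻¹' {1}) (x ⁻¹' {-1}) := by
  funext t
  have : x t = 1 ∨ x t = -1 ∨ x t = 0 := by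
    by_cases ht : t ∈ B
    · have hsq : x t * x t = 1 := by simpa [ht, ← sq] using hx.2 t
      rcases mul_self_eq_one_iff.mp hsq with h | h <;> simp [h]
    · exact Or.inr (Or.inr (notMem_support.mp (hx.support_eq ▸ ht)))
  rcases this with h | h | h <;> simp [signOf, indicator, h] <;> norm_num

theorem isSignOn_support_of_mem [MeasurableSpace Ω] (hx : Measurable x)
    (h : ∀ t, x t ∈ ({-1, 0, 1} : Set ℝ)) : IsSignOn x (support x) := by
  refine ⟨hx, fun t => ?_⟩
  rcases h t with h | h | h <;> simp_all

theorem signOf_mem (hPN : Disjoint P N) (t : Ω) : signOf P N t ∈ ({-1, 0, 1} : Set ℝ) := by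
  by_cases hP : t ∈ P
  · simp [signOf, hP, hPN.notMem_of_mem_left hP]
  · by_cases hN : t ∈ N <;> simp [signOf, hP, hN]

theorem support_signOf_subset : support (signOf P N) ⊆ P ∪ N :=
  (support_sub _ _).trans (union_subset_union support_indicator_subset support_indicator_subset)

theorem setOf_signOf_ne (hPN : Disjoint P N) (hP' : P' ⊆ P) (hN' : N' ⊆ N) :
    {t | signOf P' N' t ≠ signOf P N t} = P \ P' ∪ N \ N' := by
  ext t
  by_cases hP : t ∈ P
  · have hN : t ∉ N := hPN.notMem_of_mem_left hP
    have hN'' : t ∉ N' := fun h => hN (hN' h)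
    by_cases hP'' : t ∈ P' <;> simp [signOf, hP, hN, hP'', hN'']
  · have hP'' : t ∉ P' := fun h => hP (hP' h)
    by_cases hN : t ∈ N
    · by_cases hN'' : t ∈ N' <;> simp [signOf, hP, hN, hN'', hP'']
    · have hN'' : t ∉ N' := fun h => hN (hN' h)
      simp [signOf, hP, hN, hP'', hN'']

theorem integral_signOf [MeasurableSpace Ω] {μ : Measure Ω} [IsFiniteMeasure μ]
    (hP : MeasurableSet P) (hN : MeasurableSet N) : ∫ t, signOf P N t ∂μ = μ.real P - μ.real N := by
  rw [signOf, integral_sub' ((integrable_const 1).indicator hP) ((integrable_const 1).indicator hN),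
    integral_indicator_one hP, integral_indicator_one hN]

end Sign

section DensityApprox

variable {Ω : Type*} [MeasurableSpace Ω] {ν μ : Measure Ω} {B P N : Set Ω} {b δ : ℝ}

theorem mul_measureReal_sdiff_le [IsFiniteMeasure μ]
    (h : ∀ C ⊆ B, MeasurableSet C → |μ.real C - b * ν.real C| ≤ δ)
    (hPB : P ⊆ B) (hNB : N ⊆ B) (hP : MeasurableSet P) (hN : MeasurableSet N) {P' : Set Ω}
    (hP'P : P' ⊆ P) (hP' : MeasurableSet P') (hν : ν.real P = ν.real N)
    (hμ : μ.real P' = μ.real N) : b * ν.real (P \ P') ≤ 3 * δ := by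
  have hdiff := abs_le.mp (h (P \ P') (sdiff_subset.trans hPB) (hP.diff hP'))
  have hP_le := abs_le.mp (h P hPB hP)
  have hN_le := abs_le.mp (h N hNB hN)
  rw [measureReal_sdiff hP'P hP', hμ] at hdiff
  rw [hν] at hP_le
  linarith [hdiff.1, hP_le.2, hN_le.1]

theorem exists_subsets_measure_eq_of_density_approx (hμ : μ.IsNonatomic) [IsFiniteMeasure μ]
    (h : ∀ C ⊆ B, MeasurableSet C → |μ.real C - b * ν.real C| ≤ δ)
    (hPB : P ⊆ B) (hNB : N ⊆ B) (hP : MeasurableSet P) (hN : MeasurableSet N)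
    (hν : ν.real P = ν.real N) :
    ∃ P' ⊆ P, ∃ N' ⊆ N, MeasurableSet P' ∧ MeasurableSet N' ∧ μ P' = μ N' ∧
      b * ν.real (P \ P' ∪ N \ N') ≤ 3 * δ := by
  wlog hNP : μ N ≤ μ P generalizing P N
  · obtain ⟨N', hN'N, P', hP'P, hN', hP', hμ', hest⟩ :=
      this hNB hPB hN hP hν.symm (not_le.mp hNP).le
    exact ⟨P', hP'P, N', hN'N, hP', hN', hμ'.symm, union_comm (P \ P') _ ▸ hest⟩
  obtain ⟨P', hP'P, hP', hμP'⟩ := hμ.exists_subset_measure_eq hP (measure_ne_top μ P) hNP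
  refine ⟨P', hP'P, N, subset_rfl, hP', hN, hμP', ?_⟩
  rw [sdiff_self, union_empty]
  exact mul_measureReal_sdiff_le h hPB hNB hP hN hP'P hP' hν (by simp [measureReal_def, hμP'])

end DensityApprox

theorem exists_meanZero_sign_close_of_density_approx_general {Ω : Type*} [MeasurableSpace Ω]
    (nu lam : Measure Ω) [IsFiniteMeasure nu] [IsFiniteMeasure lam]
    (hna : ∀ A : Set Ω, MeasurableSet A → 0 < lam A →
      ∃ C, C ⊆ A ∧ MeasurableSet C ∧ 0 < lam C ∧ lam C < lam A)
    (B : Set Ω)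
    (b ε : ℝ)
    (h : ∀ C : Set Ω, C ⊆ B → MeasurableSet C →
      |(lam C).toReal - b * (nu C).toReal| ≤ ε * (nu B).toReal ^ (1 / 2 : ℝ)) :
    ∀ x : Ω → ℝ, IsSignOn x B → (∫ t, x t ∂nu) = 0 →
      ∃ xe : Ω → ℝ, Measurable xe ∧ (∀ t, xe t ∈ ({-1, 0, 1} : Set ℝ)) ∧
        Function.support xe ⊆ B ∧ IsSignOn xe (Function.support xe) ∧
        (∫ t, xe t ∂lam) = 0 ∧
        b * (nu {t | xe t ≠ x t}).toReal ≤ 3 * ε * (nu B).toReal ^ (1 / 2 : ℝ) := by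
  intro x hx hx₀
  set P := x ⁻¹' {1}
  set N := x ⁻¹' {-1}
  have hP : MeasurableSet P := hx.1 (measurableSet_singleton 1)
  have hN : MeasurableSet N := hx.1 (measurableSet_singleton (-1))
  have hPB : P ⊆ B := fun t (ht : x t = 1) => hx.support_eq ▸ (by simp [ht] : t ∈ support x)
  have hNB : N ⊆ B := fun t (ht : x t = -1) => hx.support_eq ▸ (by simp [ht] : t ∈ support x)
  have hPN : Disjoint P N := (disjoint_singleton.mpr (by norm_num)).preimage x
  have hν : nu.real P = nu.real N := by
    rwa [hx.eq_signOf, integral_signOf hP hN, sub_eq_zero] at hx₀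
  obtain ⟨P', hP'P, N', hN'N, hP', hN', hlam, hest⟩ :=
    exists_subsets_measure_eq_of_density_approx hna h hPB hNB hP hN hν
  have hP'N' : Disjoint P' N' := hPN.mono hP'P hN'N
  have hxe : Measurable (signOf P' N') :=
    (measurable_const.indicator hP').sub (measurable_const.indicator hN')
  refine ⟨signOf P' N', hxe, signOf_mem hP'N', ?_, isSignOn_support_of_mem hxe (signOf_mem hP'N'),
    ?_, ?_⟩
  · exact support_signOf_subset.trans (union_subset (hP'P.trans hPB) (hN'N.trans hNB))
  · rw [integral_signOf hP' hN', measureReal_def, measureReal_def, hlam, sub_self]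
  · rw [mul_assoc 3, ← measureReal_def, hx.eq_signOf, setOf_signOf_ne hPN hP'P hN'N]
    exact hest

/-- If `λ` is finite and non-atomic, `ν B > 0`, `b > 0`, `ε > 0`, and
`|λ C - b·ν C| ≤ ε·(ν B)^(1/2)` for every measurable `C ⊆ B`, then every mean zero
(w.r.t. `ν`) sign `x` on `B` admits a mean zero (w.r.t. `λ`) sign `x_ε` supported in `B`
with `b·ν {x_ε ≠ x} ≤ 3ε·(ν B)^(1/2)`. -/
theorem exists_meanZero_sign_close_of_density_approx {Ω : Type*} [MeasurableSpace Ω]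
    (nu lam : Measure Ω) [IsFiniteMeasure nu] [IsFiniteMeasure lam]
    (hna : ∀ A : Set Ω, MeasurableSet A → 0 < lam A →
      ∃ C, C ⊆ A ∧ MeasurableSet C ∧ 0 < lam C ∧ lam C < lam A)
    (B : Set Ω) (hB : MeasurableSet B) (hBpos : 0 < nu B)
    (b ε : ℝ) (hb : 0 < b) (hε : 0 < ε)
    (h : ∀ C : Set Ω, C ⊆ B → MeasurableSet C →
      |(lam C).toReal - b * (nu C).toReal| ≤ ε * (nu B).toReal ^ (1 / 2 : ℝ)) :
    ∀ x : Ω → ℝ, IsSignOn x B → (∫ t, x t ∂nu) = 0 →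
      ∃ xe : Ω → ℝ, Measurable xe ∧ (∀ t, xe t ∈ ({-1, 0, 1} : Set ℝ)) ∧
        Function.support xe ⊆ B ∧ IsSignOn xe (Function.support xe) ∧
        (∫ t, xe t ∂lam) = 0 ∧
        b * (nu {t | xe t ≠ x t}).toReal ≤ 3 * ε * (nu B).toReal ^ (1 / 2 : ℝ) :=
  exists_meanZero_sign_close_of_density_approx_general nu lam hna B b ε h
end
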